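/- Let W : X → P(Y) with X, Y finite, P a probability mass function on X, α ∈ (0,1), and let Q_{α,P} be a strictly positive probability mass function on Y achieving I_α(P;W) = min_Q D_α(W‖Q|P). Then for every probability mass function Q on Y: D_α(W‖Q|P) − I_α(P;W) ≥ D_α(Q_{α,P}‖Q) (the Erven–Harremoës-type bound for Augustin information). -/

import Mathlib

open scoped BigOperators

/-- A probability mass function on a finite type. -/
def IsPMF {Y : Type*} [Fintype Y] (Q : Y → ℝ) : Prop :=
  (∀ y, 0 ≤ Q y) ∧ ∑ y, Q y = 1

/-- The power sum appearing in the Rényi divergence; since `(0:ℝ) ^ (1-α) = 0` for `1-α > 0`,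
the sum automatically restricts to `y` with `Q y > 0`. -/
noncomputable def rSum {Y : Type*} [Fintype Y] (α : ℝ) (W Q : Y → ℝ) : ℝ :=
  ∑ y, W y ^ α * Q y ^ (1 - α)

/-- Order-`α` Rényi divergence (for `α ∈ (0,1)`), valued in `EReal`, with the convention
that it is `⊤` when the power sum vanishes. -/
noncomputable def rDiv {Y : Type*} [Fintype Y] (α : ℝ) (W Q : Y → ℝ) : EReal :=
  if rSum α W Q = 0 then ⊤
  else (((1 / (α - 1)) * Real.log (rSum α W Q) : ℝ) : EReal)

/-- Kullback–Leibler divergence, valued in `EReal`, `⊤` unless `W ≪ Q`. -/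
noncomputable def kDiv {Y : Type*} [Fintype Y] (W Q : Y → ℝ) : EReal :=
  if ∀ y, Q y = 0 → W y = 0 then
    (((∑ y, if W y = 0 then 0 else W y * Real.log (W y / Q y)) : ℝ) : EReal)
  else ⊤

/-- Order-`α` divergence for `α ∈ (0,1]`: Rényi for `α ≠ 1`, KL for `α = 1`. -/
noncomputable def dA {Y : Type*} [Fintype Y] (α : ℝ) (W Q : Y → ℝ) : EReal :=
  if α = 1 then kDiv W Q else rDiv α W Q

/-- Conditional divergence `D_α(W‖Q|P) = ∑_x P(x) D_α(W(x)‖Q)`. -/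
noncomputable def cDiv {X Y : Type*} [Fintype X] [Fintype Y]
    (α : ℝ) (W : X → Y → ℝ) (Q : Y → ℝ) (P : X → ℝ) : EReal :=
  ∑ x, (P x : EReal) * dA α (W x) Q

/-- Augustin information `I_α(P;W) = inf_Q D_α(W‖Q|P)`. -/
noncomputable def aInfo {X Y : Type*} [Fintype X] [Fintype Y]
    (α : ℝ) (P : X → ℝ) (W : X → Y → ℝ) : EReal :=
  ⨅ Q ∈ {Q : Y → ℝ | IsPMF Q}, cDiv α W Q P

/-!
If `Q_{α,P}` minimises `Q ↦ D_α(W‖Q|P)`, it is a fixed point of the Augustin operator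
`T(Q) = ∑ₓ P(x) W(x)^α Q^{1-α} / ∑_y W(x)^α Q^{1-α}`: Jensen's inequality for the convex map
`φ(t) = log t / (α-1)` gives `D_α(W‖T(Q)|P) - D_α(W‖Q|P) ≤ -D(T(Q)‖Q)`, so minimality forces
`T(Q) = Q` by Gibbs' inequality. For any `Q`, Jensen's inequality for `φ` applied to the ratios
`r_x = ∑_y W(x)^α Q^{1-α} / ∑_y W(x)^α Q_{α,P}^{1-α}` gives
`D_α(W‖Q|P) - D_α(W‖Q_{α,P}|P) = ∑ₓ P(x) φ(r_x) ≥ φ(∑ₓ P(x) r_x)`, and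
`∑ₓ P(x) r_x = ∑_y T(Q_{α,P}) (Q/Q_{α,P})^{1-α}` equals `∑_y Q_{α,P}^α Q^{1-α}`
at the fixed point.
-/

open Finset Real

theorem ConvexOn.map_sum_le_of_support {𝕜 E β ι : Type*} [Field 𝕜] [LinearOrder 𝕜]
    [IsStrictOrderedRing 𝕜] [AddCommGroup E] [AddCommGroup β] [PartialOrder β]
    [IsOrderedAddMonoid β] [Module 𝕜 E] [Module 𝕜 β] [IsStrictOrderedModule 𝕜 β]
    {s : Set E} {f : E → β} {t : Finset ι} {w : ι → 𝕜} {p : ι → E} (hf : ConvexOn 𝕜 s f)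
    (h₀ : ∀ i ∈ t, 0 ≤ w i) (h₁ : ∑ i ∈ t, w i = 1) (hmem : ∀ i ∈ t, w i ≠ 0 → p i ∈ s) :
    f (∑ i ∈ t, w i • p i) ≤ ∑ i ∈ t, w i • f (p i) := by
  classical
  have key := hf.map_sum_le (t := t.filter (w · ≠ 0)) (fun i hi => h₀ i (mem_filter.1 hi).1)
    (by rwa [sum_filter_ne_zero]) fun i hi => hmem i (mem_filter.1 hi).1 (mem_filter.1 hi).2
  rwa [sum_filter_of_ne fun i _ hi => left_ne_zero_of_smul hi,
    sum_filter_of_ne fun i _ hi => left_ne_zero_of_smul hi] at key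

theorem EReal.sum_ne_bot {ι : Type*} {s : Finset ι} {f : ι → EReal} (h : ∀ i ∈ s, f i ≠ ⊥) :
    ∑ i ∈ s, f i ≠ ⊥ := by
  induction s using Finset.cons_induction with
  | empty => simp
  | cons a s ha ih =>
    rw [sum_cons, Ne, EReal.add_eq_bot_iff, not_or]
    exact ⟨h a (mem_cons_self a s), ih fun i hi => h i (mem_cons_of_mem hi)⟩

theorem EReal.sum_eq_top {ι : Type*} [DecidableEq ι] {s : Finset ι} {f : ι → EReal}
    (h : ∀ i ∈ s, f i ≠ ⊥) {i : ι} (hi : i ∈ s) (htop : f i = ⊤) : ∑ j ∈ s, f j = ⊤ := by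
  rw [← add_sum_erase _ _ hi, htop]
  exact EReal.top_add_of_ne_bot (EReal.sum_ne_bot fun j hj => h j (mem_of_mem_erase hj))

theorem EReal.coe_finset_sum {ι : Type*} (s : Finset ι) (f : ι → ℝ) :
    ((∑ i ∈ s, f i : ℝ) : EReal) = ∑ i ∈ s, (f i : EReal) :=
  map_sum (⟨⟨Real.toEReal, EReal.coe_zero⟩, EReal.coe_add⟩ : ℝ →+ EReal) f s

theorem convexOn_one_div_sub_one_mul_log {α : ℝ} (hα : α < 1) :
    ConvexOn ℝ (Set.Ioi 0) fun t => 1 / (α - 1) * log t := by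
  have h : (fun t => 1 / (α - 1) * log t) = (1 / (1 - α)) • fun t => -log t := by
    funext t
    simp only [Pi.smul_apply, smul_eq_mul]
    field_simp [sub_ne_zero.2 hα.ne, sub_ne_zero.2 hα.ne']
    ring
  rw [h]
  exact strictConcaveOn_log_Ioi.concaveOn.neg.smul (div_nonneg zero_le_one (by linarith))

theorem mul_log_div_lt_sub {a b : ℝ} (ha : 0 ≤ a) (hb : 0 < b) (hab : a ≠ b) :
    a * log (b / a) < b - a := by
  rcases ha.eq_or_lt with rfl | ha
  · simpa using hb
  have hne : b / a ≠ 1 := by rwa [Ne, div_eq_one_iff_eq ha.ne', eq_comm]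
  calc a * log (b / a) < a * (b / a - 1) :=
        mul_lt_mul_of_pos_left (log_lt_sub_one_of_pos (div_pos hb ha) hne) ha
    _ = b - a := by field_simp

section Divergence

variable {X Y : Type*} [Fintype Y] {α : ℝ}

theorem IsPMF.exists_ne_zero {p : Y → ℝ} (hp : IsPMF p) : ∃ y, p y ≠ 0 := by
  by_contra! h
  simpa [h] using hp.2

/-- Gibbs' inequality, equality case. -/
theorem IsPMF.eq_of_sum_mul_log_div_nonneg {p q : Y → ℝ} (hp : IsPMF p) (hq : IsPMF q)
    (hqpos : ∀ y, 0 < q y) (h : 0 ≤ ∑ y, p y * log (q y / p y)) : p = q := by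
  by_contra! hne
  obtain ⟨y₀, hy₀⟩ := Function.ne_iff.1 hne
  have hle : ∀ y, p y * log (q y / p y) ≤ q y - p y := fun y => by
    by_cases hy : p y = q y
    · simp [hy]
    · exact (mul_log_div_lt_sub (hp.1 y) (hqpos y) hy).le
  have hlt := sum_lt_sum (fun y _ => hle y)
    ⟨y₀, mem_univ _, mul_log_div_lt_sub (hp.1 y₀) (hqpos y₀) hy₀⟩
  rw [sum_sub_distrib, hp.2, hq.2, sub_self] at hlt
  linarith

theorem rSum_nonneg {W Q : Y → ℝ} (hW : ∀ y, 0 ≤ W y) (hQ : ∀ y, 0 ≤ Q y) :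
    0 ≤ rSum α W Q :=
  sum_nonneg fun y _ => mul_nonneg (rpow_nonneg (hW y) _) (rpow_nonneg (hQ y) _)

theorem rSum_pos {W Q : Y → ℝ} (hW : ∀ y, 0 ≤ W y) (hQ : ∀ y, 0 ≤ Q y) {y : Y}
    (hWy : W y ≠ 0) (hQy : Q y ≠ 0) : 0 < rSum α W Q := by
  refine sum_pos' (fun i _ => mul_nonneg (rpow_nonneg (hW i) _) (rpow_nonneg (hQ i) _))
    ⟨y, mem_univ y, ?_⟩
  have := (hW y).lt_of_ne' hWy
  have := (hQ y).lt_of_ne' hQy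
  positivity

theorem IsPMF.rSum_pos {W Q : Y → ℝ} (hW : IsPMF W) (hQ : ∀ y, 0 < Q y) : 0 < rSum α W Q :=
  have ⟨_, hy⟩ := hW.exists_ne_zero
  _root_.rSum_pos hW.1 (fun y => (hQ y).le) hy (hQ _).ne'

theorem rSum_eq_sum_mul_div_rpow {Q R : Y → ℝ} (hQ : ∀ y, 0 < Q y) (hR : ∀ y, 0 ≤ R y) :
    rSum α Q R = ∑ y, Q y * (R y / Q y) ^ (1 - α) := by
  refine sum_congr rfl fun y _ => ?_
  have hQα : Q y ^ α * Q y ^ (1 - α) = Q y := by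
    rw [← rpow_add (hQ y), add_sub_cancel, rpow_one]
  rw [div_rpow (hR y) (hQ y).le, mul_div_assoc', eq_div_iff (rpow_pos_of_pos (hQ y) _).ne']
  linear_combination R y ^ (1 - α) * hQα

noncomputable def tiltedChannel (α : ℝ) (W : X → Y → ℝ) (Q : Y → ℝ) (x : X) (y : Y) : ℝ :=
  W x y ^ α * Q y ^ (1 - α) / rSum α (W x) Q

variable {W : X → Y → ℝ} {Q R : Y → ℝ}

theorem tiltedChannel_nonneg (hW : ∀ x y, 0 ≤ W x y) (hQ : ∀ y, 0 ≤ Q y) (x : X) (y : Y) :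
    0 ≤ tiltedChannel α W Q x y :=
  div_nonneg (mul_nonneg (rpow_nonneg (hW x y) _) (rpow_nonneg (hQ y) _))
    (rSum_nonneg (hW x) hQ)

theorem tiltedChannel_pos (hW : ∀ x, IsPMF (W x)) (hQ : ∀ y, 0 < Q y) {x : X} {y : Y}
    (hxy : W x y ≠ 0) : 0 < tiltedChannel α W Q x y := by
  have := ((hW x).1 y).lt_of_ne' hxy
  have := (hW x).rSum_pos (α := α) hQ
  have := hQ y
  unfold tiltedChannel
  positivity

theorem sum_tiltedChannel {x : X} (hx : rSum α (W x) Q ≠ 0) :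
    ∑ y, tiltedChannel α W Q x y = 1 := by
  simp only [tiltedChannel]
  rw [← sum_div, ← rSum, div_self hx]

theorem rSum_div_rSum_eq_sum_tiltedChannel (hQ : ∀ y, 0 < Q y) (hR : ∀ y, 0 ≤ R y) (x : X) :
    rSum α (W x) R / rSum α (W x) Q = ∑ y, tiltedChannel α W Q x y * (R y / Q y) ^ (1 - α) := by
  rw [rSum, sum_div]
  refine sum_congr rfl fun y _ => ?_
  rw [tiltedChannel, div_rpow (hR y) (hQ y).le]
  field_simp [(rpow_pos_of_pos (hQ y) (1 - α)).ne']

theorem one_div_sub_one_mul_log_rSum_div_le (hα : α < 1) (hW : ∀ x, IsPMF (W x))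
    (hQ : ∀ y, 0 < Q y) (hR : ∀ y, 0 ≤ R y) (x : X)
    (hRpos : ∀ y, tiltedChannel α W Q x y ≠ 0 → R y ≠ 0) :
    1 / (α - 1) * log (rSum α (W x) R / rSum α (W x) Q)
      ≤ ∑ y, tiltedChannel α W Q x y * log (Q y / R y) := by
  have hpos : ∀ y, tiltedChannel α W Q x y ≠ 0 → 0 < R y / Q y := fun y hy =>
    div_pos ((hR y).lt_of_ne' (hRpos y hy)) (hQ y)
  rw [rSum_div_rSum_eq_sum_tiltedChannel hQ hR x]
  calc _ ≤ ∑ y, tiltedChannel α W Q x y * (1 / (α - 1) * log ((R y / Q y) ^ (1 - α))) := by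
        simpa only [smul_eq_mul] using (convexOn_one_div_sub_one_mul_log hα).map_sum_le_of_support
          (fun y _ => tiltedChannel_nonneg (fun x => (hW x).1) (fun y => (hQ y).le) x y)
          (sum_tiltedChannel ((hW x).rSum_pos hQ).ne') fun y _ hy => rpow_pos_of_pos (hpos y hy) _
    _ = ∑ y, tiltedChannel α W Q x y * log (Q y / R y) := sum_congr rfl fun y _ => by
        by_cases hy : tiltedChannel α W Q x y = 0
        · simp [hy]
        have hlog : log (Q y / R y) = -log (R y / Q y) := by rw [← log_inv, inv_div]
        rw [log_rpow (hpos y hy), hlog]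
        field_simp [sub_ne_zero.2 hα.ne]
        ring

variable [Fintype X]

/-- The Augustin operator `T_{α,P}`. -/
noncomputable def augustinOperator (α : ℝ) (P : X → ℝ) (W : X → Y → ℝ) (Q : Y → ℝ) (y : Y) :
    ℝ :=
  ∑ x, P x * tiltedChannel α W Q x y

/-- The conditional divergence as a real number, valid when every `rSum α (W x) Q`
with `P x ≠ 0` is nonzero. -/
noncomputable def realCDiv (α : ℝ) (W : X → Y → ℝ) (Q : Y → ℝ) (P : X → ℝ) : ℝ :=
  ∑ x, P x * (1 / (α - 1) * log (rSum α (W x) Q))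

variable {P : X → ℝ}

theorem sum_mul_sum_tiltedChannel_mul (g : Y → ℝ) :
    ∑ x, P x * ∑ y, tiltedChannel α W Q x y * g y = ∑ y, augustinOperator α P W Q y * g y := by
  simp only [augustinOperator, mul_sum, sum_mul]
  rw [sum_comm]
  exact sum_congr rfl fun _ _ => sum_congr rfl fun _ _ => by ring

theorem isPMF_augustinOperator (hW : ∀ x, IsPMF (W x)) (hP : IsPMF P) (hQ : ∀ y, 0 < Q y) :
    IsPMF (augustinOperator α P W Q) := by
  refine ⟨fun y => sum_nonneg fun x _ =>
    mul_nonneg (hP.1 x) (tiltedChannel_nonneg (fun x => (hW x).1) (fun y => (hQ y).le) x y), ?_⟩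
  simp only [augustinOperator]
  rw [sum_comm]
  simp only [← mul_sum, sum_tiltedChannel ((hW _).rSum_pos hQ).ne', mul_one]
  exact hP.2

theorem augustinOperator_pos (hW : ∀ x y, 0 ≤ W x y) (hP : ∀ x, 0 ≤ P x) (hQ : ∀ y, 0 ≤ Q y)
    {x : X} {y : Y} (hx : P x ≠ 0) (hxy : tiltedChannel α W Q x y ≠ 0) :
    0 < augustinOperator α P W Q y :=
  sum_pos' (fun i _ => mul_nonneg (hP i) (tiltedChannel_nonneg hW hQ i y))
    ⟨x, mem_univ x,
      mul_pos ((hP x).lt_of_ne' hx) ((tiltedChannel_nonneg hW hQ x y).lt_of_ne' hxy)⟩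

theorem cDiv_eq_realCDiv (hα : α ≠ 1) (h : ∀ x, P x ≠ 0 → rSum α (W x) Q ≠ 0) :
    cDiv α W Q P = realCDiv α W Q P := by
  rw [cDiv, realCDiv, EReal.coe_finset_sum]
  refine sum_congr rfl fun x _ => ?_
  by_cases hx : P x = 0
  · simp [hx]
  · rw [dA, if_neg hα, rDiv, if_neg (h x hx), ← EReal.coe_mul]

theorem cDiv_eq_top (hα : α ≠ 1) (hP : ∀ x, 0 ≤ P x) {x₀ : X} (hx₀ : P x₀ ≠ 0)
    (h : rSum α (W x₀) Q = 0) : cDiv α W Q P = ⊤ := by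
  classical
  refine EReal.sum_eq_top (fun x _ => ?_) (mem_univ x₀) ?_
  · rw [dA, if_neg hα, rDiv]
    split_ifs
    · rcases (hP x).eq_or_lt with hx | hx
      · simp [← hx]
      · simp [EReal.coe_mul_top_of_pos hx]
    · exact EReal.coe_mul _ _ ▸ EReal.coe_ne_bot _
  · rw [dA, if_neg hα, rDiv, if_pos h, EReal.coe_mul_top_of_pos ((hP x₀).lt_of_ne' hx₀)]

theorem realCDiv_sub_realCDiv (hR : ∀ x, P x ≠ 0 → rSum α (W x) R ≠ 0)
    (hQ : ∀ x, P x ≠ 0 → rSum α (W x) Q ≠ 0) :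
    realCDiv α W R P - realCDiv α W Q P
      = ∑ x, P x * (1 / (α - 1) * log (rSum α (W x) R / rSum α (W x) Q)) := by
  rw [realCDiv, realCDiv, ← sum_sub_distrib]
  refine sum_congr rfl fun x _ => ?_
  by_cases hx : P x = 0
  · simp [hx]
  · rw [log_div (hR x hx) (hQ x hx)]
    ring

theorem isFixedPt_augustinOperator (hα : α < 1) (hW : ∀ x, IsPMF (W x)) (hP : IsPMF P)
    (hQ : IsPMF Q) (hQpos : ∀ y, 0 < Q y) (hmin : ∀ R, IsPMF R → cDiv α W Q P ≤ cDiv α W R P) :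
    Function.IsFixedPt (augustinOperator α P W) Q := by
  set μ := augustinOperator α P W Q
  have hWnn : ∀ x y, 0 ≤ W x y := fun x => (hW x).1
  have hμ : IsPMF μ := isPMF_augustinOperator hW hP hQpos
  have hμpos : ∀ x y, P x ≠ 0 → tiltedChannel α W Q x y ≠ 0 → 0 < μ y := fun x y hx hxy =>
    augustinOperator_pos hWnn hP.1 (fun y => (hQpos y).le) hx hxy
  have hμW : ∀ x, P x ≠ 0 → rSum α (W x) μ ≠ 0 := fun x hx =>
    have ⟨_, hy⟩ := (hW x).exists_ne_zero
    (rSum_pos (hW x).1 hμ.1 hy (hμpos x _ hx (tiltedChannel_pos hW hQpos hy).ne').ne').ne'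
  have hQW : ∀ x, P x ≠ 0 → rSum α (W x) Q ≠ 0 := fun x _ => ((hW x).rSum_pos hQpos).ne'
  have hle : realCDiv α W Q P ≤ realCDiv α W μ P := by
    have := hmin μ hμ
    rwa [cDiv_eq_realCDiv hα.ne hQW, cDiv_eq_realCDiv hα.ne hμW, EReal.coe_le_coe_iff] at this
  refine hμ.eq_of_sum_mul_log_div_nonneg hQ hQpos ?_
  calc 0 ≤ realCDiv α W μ P - realCDiv α W Q P := sub_nonneg.2 hle
    _ = ∑ x, P x * (1 / (α - 1) * log (rSum α (W x) μ / rSum α (W x) Q)) :=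
        realCDiv_sub_realCDiv hμW hQW
    _ ≤ ∑ x, P x * ∑ y, tiltedChannel α W Q x y * log (Q y / μ y) := by
        refine sum_le_sum fun x _ => ?_
        by_cases hx : P x = 0
        · simp [hx]
        exact mul_le_mul_of_nonneg_left (one_div_sub_one_mul_log_rSum_div_le hα hW hQpos hμ.1 x
          fun y hy => (hμpos x y hx hy).ne') (hP.1 x)
    _ = ∑ y, μ y * log (Q y / μ y) := sum_mul_sum_tiltedChannel_mul _

theorem one_div_sub_one_mul_log_rSum_le_realCDiv_sub (hα : α < 1) (hW : ∀ x, IsPMF (W x))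
    (hP : IsPMF P) (hQ : ∀ y, 0 < Q y) (hfix : Function.IsFixedPt (augustinOperator α P W) Q)
    (hR : ∀ y, 0 ≤ R y) (hRW : ∀ x, P x ≠ 0 → rSum α (W x) R ≠ 0) :
    1 / (α - 1) * log (rSum α Q R) ≤ realCDiv α W R P - realCDiv α W Q P := by
  have hQW : ∀ x, P x ≠ 0 → rSum α (W x) Q ≠ 0 := fun x _ => ((hW x).rSum_pos hQ).ne'
  have hsum : rSum α Q R = ∑ x, P x * (rSum α (W x) R / rSum α (W x) Q) := by
    simp only [rSum_div_rSum_eq_sum_tiltedChannel hQ hR, sum_mul_sum_tiltedChannel_mul, hfix.eq]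
    exact rSum_eq_sum_mul_div_rpow hQ hR
  rw [hsum, realCDiv_sub_realCDiv hRW hQW]
  simpa only [smul_eq_mul] using (convexOn_one_div_sub_one_mul_log hα).map_sum_le_of_support
    (fun x _ => hP.1 x) hP.2 fun x _ hx =>
      div_pos ((rSum_nonneg (hW x).1 hR).lt_of_ne' (hRW x hx)) ((hW x).rSum_pos hQ)

end Divergence

theorem augustin_EH_bound_general {X Y : Type*} [Fintype X] [Fintype Y]
    (α : ℝ) (hα : α ∈ Set.Ioo (0 : ℝ) 1)
    (W : X → Y → ℝ) (hW : ∀ x, IsPMF (W x)) (P : X → ℝ) (hP : IsPMF P)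
    (Qap : Y → ℝ) (hQap : IsPMF Qap) (hQappos : ∀ y, 0 < Qap y)
    (hmin : ∀ Q : Y → ℝ, IsPMF Q → cDiv α W Qap P ≤ cDiv α W Q P) :
    ∀ Q : Y → ℝ, IsPMF Q →
      cDiv α W Q P - cDiv α W Qap P ≥ rDiv α Qap Q := by
  intro Q hQ
  have hα1 : α < 1 := hα.2
  have hfix := isFixedPt_augustinOperator hα1 hW hP hQap hQappos hmin
  rw [cDiv_eq_realCDiv hα1.ne fun x _ => ((hW x).rSum_pos hQappos).ne']
  by_cases hQW : ∀ x, P x ≠ 0 → rSum α (W x) Q ≠ 0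
  · obtain ⟨y, hy⟩ := hQ.exists_ne_zero
    have hQapQ := rSum_pos (α := α) (fun y => (hQappos y).le) hQ.1 (hQappos y).ne' hy
    rw [cDiv_eq_realCDiv hα1.ne hQW, rDiv, if_neg hQapQ.ne', ge_iff_le, ← EReal.coe_sub,
      EReal.coe_le_coe_iff]
    exact one_div_sub_one_mul_log_rSum_le_realCDiv_sub hα1 hW hP hQappos hfix hQ.1 hQW
  · simp only [not_forall, not_not] at hQW
    obtain ⟨x, hx, hxQ⟩ := hQW
    rw [cDiv_eq_top hα1.ne hP.1 hx hxQ, EReal.top_sub_coe]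
    exact le_top

/-- the Erven–Harremoës-type bound for the Augustin information. -/
theorem augustin_EH_bound {X Y : Type*} [Fintype X] [Fintype Y]
    [Nonempty X] [Nonempty Y]
    (α : ℝ) (hα : α ∈ Set.Ioo (0 : ℝ) 1)
    (W : X → Y → ℝ) (hW : ∀ x, IsPMF (W x)) (P : X → ℝ) (hP : IsPMF P)
    (Qap : Y → ℝ) (hQap : IsPMF Qap) (hQappos : ∀ y, 0 < Qap y)
    (hmin : ∀ Q : Y → ℝ, IsPMF Q → cDiv α W Qap P ≤ cDiv α W Q P) :
    ∀ Q : Y → ℝ, IsPMF Q →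
      cDiv α W Q P - cDiv α W Qap P ≥ rDiv α Qap Q :=
  augustin_EH_bound_general α hα W hW P hP Qap hQap hQappos hmin
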